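/- arXiv:1307.1030 — 2 statements merged into one kernel-verified Lean document; each statement's English description precedes it below -/
import Mathlib

section
/- For any isometric immersion of a Riemannian n-manifold M into Euclidean space with arbitrary codimension, and for every (n_1,...,n_k) ∈ S(n), one has H² ≥ Δ(n_1,...,n_k) at every point, where Δ(n_1,...,n_k) = δ(n_1,...,n_k)/c(n_1,...,n_k) with c(n_1,...,n_k) = n²(n+k−1−Σ n_j)/(2(n+k−Σ n_j)). -/
open scoped RealInnerProductSpace BigOperators

noncomputable section

/-- Euclidean `n`-space, modelling the tangent space `T_pM` of a Riemannian
`n`-manifold at a point (via a linear isometry given by an orthonormal frame). -/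
abbrev EV (n : ℕ) : Type := EuclideanSpace ℝ (Fin n)

/-- The standard orthonormal basis of `EV n`. -/
def stdB (n : ℕ) (i : Fin n) : EV n := EuclideanSpace.basisFun (Fin n) ℝ i

/-- Two vectors forming an orthonormal pair (hence spanning a 2-plane). -/
def OrthoPair {n : ℕ} (X Y : EV n) : Prop := Orthonormal ℝ ![X, Y]

/-- `τ` of a family of vectors: the sum `∑_{α<β} K(e_α ∧ e_β)` of sectional
curvatures over pairs of the family.  Applied to an orthonormal basis of a
subspace `L` this is the scalar curvature `τ(L)`. -/
def tauFam {n : ℕ} (K : EV n → EV n → ℝ) {r : ℕ} (e : Fin r → EV n) : ℝ :=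
  ∑ p ∈ Finset.univ.filter (fun p : Fin r × Fin r => p.1 < p.2), K (e p.1) (e p.2)

/-- The scalar curvature `τ = ∑_{i<j} K(e_i ∧ e_j)` at a point, computed in an
orthonormal basis. -/
def scalarCurv {n : ℕ} (K : EV n → EV n → ℝ) : ℝ := tauFam K (stdB n)

/-- The set of values `τ(L_1) + ⋯ + τ(L_k)` where `L_1, …, L_k` run over mutually
orthogonal subspaces of `T_pM` with `dim L_j = d j`; such a configuration is
encoded by a jointly orthonormal family `e : (Σ j, Fin (d j)) → EV n`, the
subspace `L_j` being spanned by `e ⟨j, ·⟩`. -/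
def deltaSet {n : ℕ} (K : EV n → EV n → ℝ) {k : ℕ} (d : Fin k → ℕ) : Set ℝ :=
  { s | ∃ e : (Σ j : Fin k, Fin (d j)) → EV n, Orthonormal ℝ e ∧
        s = ∑ j : Fin k, tauFam K (fun a => e ⟨j, a⟩) }

/-- Chen's δ-invariant `δ(d 0, …, d (k-1)) = τ - inf (τ(L_1) + ⋯ + τ(L_k))`. -/
def deltaInv {n : ℕ} (K : EV n → EV n → ℝ) {k : ℕ} (d : Fin k → ℕ) : ℝ :=
  scalarCurv K - sInf (deltaSet K d)

/-- Membership of a `k`-tuple `(n_1, …, n_k)` in the set `𝒮(n)`: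
`2 ≤ n_j ≤ n - 1` for each `j`, and `n_1 + ⋯ + n_k ≤ n`. -/
def InS (n : ℕ) {k : ℕ} (d : Fin k → ℕ) : Prop :=
  (∀ j, 2 ≤ d j ∧ d j ≤ n - 1) ∧ ∑ j, d j ≤ n

/-- Chen's coefficient `c(n_1,…,n_k) = n²(n+k-1-Σn_j) / (2(n+k-Σn_j))`. -/
def cCoeff (n : ℕ) {k : ℕ} (d : Fin k → ℕ) : ℝ :=
  ((n : ℝ) ^ 2 * ((n : ℝ) + (k : ℝ) - 1 - ∑ j, (d j : ℝ))) /
    (2 * ((n : ℝ) + (k : ℝ) - ∑ j, (d j : ℝ)))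

/-- The normalized δ-invariant `Δ(n_1,…,n_k) = δ(n_1,…,n_k)/c(n_1,…,n_k)`. -/
def normDelta {n : ℕ} (K : EV n → EV n → ℝ) {k : ℕ} (d : Fin k → ℕ) : ℝ :=
  deltaInv K d / cCoeff n d

/-- Sectional curvature of the submanifold obtained from the Gauss equation:
`K(X∧Y) = K̃(X∧Y) + ⟨h(X,X),h(Y,Y)⟩ - ‖h(X,Y)‖²` (for an orthonormal pair
`X, Y`), where `K̃` is the ambient sectional curvature restricted to the tangent
space and `h` is the second fundamental form at the point. -/
def gaussK {n : ℕ} {F : Type*} [NormedAddCommGroup F] [InnerProductSpace ℝ F]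
    (Ktil : EV n → EV n → ℝ) (h : EV n →ₗ[ℝ] EV n →ₗ[ℝ] F) : EV n → EV n → ℝ :=
  fun X Y => Ktil X Y + ⟪h X X, h Y Y⟫ - ‖h X Y‖ ^ 2

/-- The mean curvature vector `H = (1/n) trace h` of a second fundamental form. -/
def meanCurv {n : ℕ} {F : Type*} [NormedAddCommGroup F] [InnerProductSpace ℝ F]
    (h : EV n →ₗ[ℝ] EV n →ₗ[ℝ] F) : F :=
  (n : ℝ)⁻¹ • ∑ i, h (stdB n i) (stdB n i)

/-!
With flat ambient space the Gauss equation gives `2 τ(L) = ‖tr h|_L‖² - ‖h|_L‖²` for every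
subspace `L`, both terms being independent of the orthonormal basis used to compute them.
Complete orthonormal bases of `L_1, …, L_k` to one of `T_pM`; this splits `T_pM` into
`m = k + (n - Σ n_j)` blocks: the `L_j` and the lines spanned by the remaining basis vectors.
Discarding from `‖h‖²` all entries outside the diagonal blocks gives
`2 (τ - Σ τ(L_j)) ≤ ‖tr h‖² - (Σ_j ‖tr h|_{L_j}‖² + Σ_r ‖h(e_r, e_r)‖²)`, and Cauchy–Schwarz over
the `m` blocks bounds the bracket below by `‖tr h‖² / m = n² H² / m`. Hence
`τ - Σ τ(L_j) ≤ (m - 1) n² H² / (2 m) = c H²`.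
-/

theorem two_mul_sum_filter_lt {ι : Type*} [Fintype ι] [LinearOrder ι] (g : ι → ι → ℝ)
    (hg : ∀ i j, g i j = g j i) :
    2 * ∑ p ∈ Finset.univ.filter (fun p : ι × ι => p.1 < p.2), g p.1 p.2
      = ∑ i, ∑ j, g i j - ∑ i, g i i := by
  have hswap : ∑ p ∈ Finset.univ.filter (fun p : ι × ι => p.2 < p.1), g p.1 p.2
      = ∑ p ∈ Finset.univ.filter (fun p : ι × ι => p.1 < p.2), g p.1 p.2 :=
    Finset.sum_nbij' Prod.swap Prod.swap (by simp) (by simp) (by simp) (by simp)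
      fun p _ => hg _ _
  have hdiag : ∑ p ∈ Finset.univ.filter (fun p : ι × ι => p.1 = p.2), g p.1 p.2
      = ∑ i, g i i := by
    rw [Finset.sum_filter, Fintype.sum_prod_type]
    simp
  have htrichotomy : ∑ p : ι × ι, g p.1 p.2
      = ∑ p ∈ Finset.univ.filter (fun p : ι × ι => p.1 < p.2), g p.1 p.2
        + ∑ p ∈ Finset.univ.filter (fun p : ι × ι => p.2 < p.1), g p.1 p.2
        + ∑ p ∈ Finset.univ.filter (fun p : ι × ι => p.1 = p.2), g p.1 p.2 := by
    simp only [Finset.sum_filter, ← Finset.sum_add_distrib]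
    refine Finset.sum_congr rfl fun p _ => ?_
    rcases lt_trichotomy p.1 p.2 with h | h | h
    · simp [h, h.not_gt, h.ne]
    · simp [h]
    · simp [h, h.not_gt, h.ne']
  rw [← Fintype.sum_prod_type', htrichotomy, hswap, hdiag]
  ring

section Trace

variable {E F W : Type*} [NormedAddCommGroup E] [InnerProductSpace ℝ E]
  [SeminormedAddCommGroup F] [InnerProductSpace ℝ F] [AddCommGroup W] [Module ℝ W]
  {ι ι' : Type*} [Fintype ι] [Fintype ι']

theorem OrthonormalBasis.sum_apply_self_eq (B : E →ₗ[ℝ] E →ₗ[ℝ] W)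
    (b : OrthonormalBasis ι ℝ E) (b' : OrthonormalBasis ι' ℝ E) :
    ∑ i, B (b i) (b i) = ∑ p, B (b' p) (b' p) := by
  calc ∑ i, B (b i) (b i)
      = ∑ i, ∑ p, B (⟪b i, b' p⟫ • b i) (b' p) := by
        refine Finset.sum_congr rfl fun i _ => ?_
        conv_lhs => arg 2; rw [← b'.sum_repr' (b i)]
        simp [real_inner_comm]
    _ = ∑ p, B (b' p) (b' p) := by
        rw [Finset.sum_comm]
        simp only [← LinearMap.sum_apply, ← map_sum, b.sum_repr']

theorem OrthonormalBasis.sum_norm_sq_apply_eq (g : E →ₗ[ℝ] F)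
    (b : OrthonormalBasis ι ℝ E) (b' : OrthonormalBasis ι' ℝ E) :
    ∑ i, ‖g (b i)‖ ^ 2 = ∑ p, ‖g (b' p)‖ ^ 2 := by
  simpa [real_inner_self_eq_norm_sq] using
    b.sum_apply_self_eq ((innerₗ F).compl₁₂ g g) b'

theorem OrthonormalBasis.sum_sum_norm_sq_apply_eq (h : E →ₗ[ℝ] E →ₗ[ℝ] F)
    (b : OrthonormalBasis ι ℝ E) (b' : OrthonormalBasis ι' ℝ E) :
    ∑ i, ∑ j, ‖h (b i) (b j)‖ ^ 2 = ∑ p, ∑ q, ‖h (b' p) (b' q)‖ ^ 2 := by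
  calc ∑ i, ∑ j, ‖h (b i) (b j)‖ ^ 2
      = ∑ i, ∑ q, ‖h.flip (b' q) (b i)‖ ^ 2 :=
        Finset.sum_congr rfl fun i _ => b.sum_norm_sq_apply_eq (h (b i)) b'
    _ = ∑ q, ∑ p, ‖h.flip (b' q) (b' p)‖ ^ 2 := by
        rw [Finset.sum_comm]
        exact Finset.sum_congr rfl fun q _ => b.sum_norm_sq_apply_eq (h.flip (b' q)) b'
    _ = ∑ p, ∑ q, ‖h (b' p) (b' q)‖ ^ 2 := Finset.sum_comm

def traceSqSubNormSq {ι F : Type*} [Fintype ι] [SeminormedAddCommGroup F] (x : ι → ι → F) :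
    ℝ :=
  ‖∑ i, x i i‖ ^ 2 - ∑ i, ∑ j, ‖x i j‖ ^ 2

theorem traceSqSubNormSq_orthonormalBasis_eq (h : E →ₗ[ℝ] E →ₗ[ℝ] F)
    (b : OrthonormalBasis ι ℝ E) (b' : OrthonormalBasis ι' ℝ E) :
    (traceSqSubNormSq fun i j => h (b i) (b j))
      = traceSqSubNormSq fun p q => h (b' p) (b' q) := by
  simp only [traceSqSubNormSq, b.sum_apply_self_eq h b', b.sum_sum_norm_sq_apply_eq h b']

end Trace

theorem two_mul_tauFam_gaussK_zero {n : ℕ} {F : Type*} [NormedAddCommGroup F]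
    [InnerProductSpace ℝ F] (h : EV n →ₗ[ℝ] EV n →ₗ[ℝ] F) (hsymm : ∀ X Y : EV n, h X Y = h Y X)
    {r : ℕ} (w : Fin r → EV n) :
    2 * tauFam (gaussK (fun _ _ => 0) h) w = traceSqSubNormSq fun i j => h (w i) (w j) := by
  have hK : ∀ X Y, gaussK (fun _ _ => 0) h X Y = gaussK (fun _ _ => 0) h Y X := fun X Y => by
    simp only [gaussK, hsymm X Y, real_inner_comm]
  have hdiag : ∀ X, gaussK (fun _ _ => 0) h X X = 0 := fun X => by
    simp [gaussK]
  rw [tauFam, two_mul_sum_filter_lt (fun i j => gaussK (fun _ _ => 0) h (w i) (w j))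
    fun i j => hK _ _]
  simp only [hdiag, Finset.sum_const_zero, sub_zero]
  simp only [traceSqSubNormSq, gaussK, zero_add, Finset.sum_sub_distrib,
    ← real_inner_self_eq_norm_sq (∑ i, h (w i) (w i)), sum_inner, inner_sum]
  rw [Finset.sum_comm]

theorem norm_sum_sq_le_card_mul_sum_norm_sq {ι F : Type*} [Fintype ι] [SeminormedAddCommGroup F]
    (v : ι → F) : ‖∑ i, v i‖ ^ 2 ≤ Fintype.card ι * ∑ i, ‖v i‖ ^ 2 :=
  calc ‖∑ i, v i‖ ^ 2 ≤ (∑ i, ‖v i‖) ^ 2 := by gcongr; exact norm_sum_le _ _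
    _ ≤ Fintype.card ι * ∑ i, ‖v i‖ ^ 2 := sq_sum_le_card_mul_sum_sq

theorem sub_le_div_mul_of_le_mul {a P m : ℝ} (hm : 0 ≤ m) (hP : 0 ≤ P) (ha : a ≤ m * P) :
    a - P ≤ (m - 1) / m * a := by
  rcases hm.eq_or_lt with rfl | hm
  · simp only [zero_mul] at ha
    simp only [div_zero, zero_mul]
    linarith
  · rw [div_mul_eq_mul_div, le_div_iff₀ hm]
    nlinarith

section Blocks

variable {F J ι : Type*} [SeminormedAddCommGroup F] [Fintype J] [Fintype ι]
  {κ : J → Type*} [∀ j, Fintype (κ j)]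

theorem sum_inl_sigma_le_sum {f : (Σ j, κ j) ⊕ ι → ℝ} (hf : ∀ a, 0 ≤ f a) (j : J) :
    ∑ β, f (.inl ⟨j, β⟩) ≤ ∑ a, f a :=
  calc ∑ β, f (.inl ⟨j, β⟩) ≤ ∑ j', ∑ β, f (.inl ⟨j', β⟩) :=
        Finset.single_le_sum (f := fun j' => ∑ β, f (.inl ⟨j', β⟩))
          (fun _ _ => Finset.sum_nonneg fun _ _ => hf _) (Finset.mem_univ j)
    _ = ∑ s, f (.inl s) := (Fintype.sum_sigma fun s => f (.inl s)).symm
    _ ≤ ∑ a, f a := by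
        rw [Fintype.sum_sum_type]
        exact le_add_of_nonneg_right (Finset.sum_nonneg fun _ _ => hf _)

/-- Cauchy–Schwarz over the `card J + card ι` blocks (the `κ j` and the singletons of `ι`),
after discarding the off-block entries of `x`. -/
theorem traceSqSubNormSq_sub_sum_blocks_le (x : (Σ j, κ j) ⊕ ι → (Σ j, κ j) ⊕ ι → F) :
    traceSqSubNormSq x
        - ∑ j, traceSqSubNormSq (fun α β : κ j => x (.inl ⟨j, α⟩) (.inl ⟨j, β⟩))
      ≤ ((Fintype.card J + Fintype.card ι : ℝ) - 1) / (Fintype.card J + Fintype.card ι)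
          * ‖∑ a, x a a‖ ^ 2 := by
  set T : J → F := fun j => ∑ α, x (.inl ⟨j, α⟩) (.inl ⟨j, α⟩)
  set c : ι → F := fun i => x (.inr i) (.inr i)
  have htrace : ∑ a, x a a = ∑ j, T j + ∑ i, c i := by
    rw [Fintype.sum_sum_type, Fintype.sum_sigma]
  have hblocks : ∑ j, ∑ α, ∑ β, ‖x (.inl ⟨j, α⟩) (.inl ⟨j, β⟩)‖ ^ 2 + ∑ i, ‖c i‖ ^ 2
      ≤ ∑ a, ∑ a', ‖x a a'‖ ^ 2 := by
    rw [Fintype.sum_sum_type (fun a => ∑ a', ‖x a a'‖ ^ 2),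
      Fintype.sum_sigma fun s => ∑ a', ‖x (.inl s) a'‖ ^ 2]
    gcongr with j _ α _ i
    · exact sum_inl_sigma_le_sum (f := fun a' => ‖x (.inl ⟨j, α⟩) a'‖ ^ 2)
        (fun _ => sq_nonneg _) j
    · exact Finset.single_le_sum (f := fun a' => ‖x (.inr i) a'‖ ^ 2)
        (fun _ _ => sq_nonneg _) (Finset.mem_univ _)
  have hCS : ‖∑ j, T j + ∑ i, c i‖ ^ 2
      ≤ (Fintype.card J + Fintype.card ι) * (∑ j, ‖T j‖ ^ 2 + ∑ i, ‖c i‖ ^ 2) := by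
    simpa [Fintype.sum_sum_type] using norm_sum_sq_le_card_mul_sum_norm_sq (Sum.elim T c)
  have := sub_le_div_mul_of_le_mul (by positivity)
    (by positivity : 0 ≤ ∑ j, ‖T j‖ ^ 2 + ∑ i, ‖c i‖ ^ 2) hCS
  simp only [traceSqSubNormSq, Finset.sum_sub_distrib] at *
  rw [htrace]
  linarith

end Blocks

theorem Orthonormal.exists_orthonormalBasis_sum_inl {E σ ι : Type*} [NormedAddCommGroup E]
    [InnerProductSpace ℝ E] [FiniteDimensional ℝ E] [Fintype σ] [Fintype ι]
    (hcard : Module.finrank ℝ E = Fintype.card σ + Fintype.card ι) {e : σ → E}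
    (he : Orthonormal ℝ e) :
    ∃ b : OrthonormalBasis (σ ⊕ ι) ℝ E, ∀ a, b (.inl a) = e a := by
  have hrestrict : (Set.range (Sum.inl : σ → σ ⊕ ι)).domRestrict (Sum.elim e 0)
      = e ∘ (Equiv.ofInjective _ Sum.inl_injective).symm := by
    funext ⟨_, a, rfl⟩
    simp [Equiv.ofInjective_symm_apply]
  obtain ⟨b, hb⟩ := Orthonormal.exists_orthonormalBasis_extension_of_card_eq
    (hcard.trans Fintype.card_sum.symm) (v := Sum.elim e 0) (s := Set.range Sum.inl)
    (by rw [hrestrict]; exact he.comp _ (Equiv.injective _))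
  exact ⟨b, fun a => hb _ ⟨a, rfl⟩⟩

theorem natCast_add_sub_sum_eq {n k : ℕ} {d : Fin k → ℕ} (hd : ∑ j, d j ≤ n) :
    ((k + (n - ∑ j, d j) : ℕ) : ℝ) = n + k - ∑ j, (d j : ℝ) := by
  push_cast [Nat.cast_sub hd]
  ring

theorem cCoeff_nonneg {n k : ℕ} {d : Fin k → ℕ} (hd : ∑ j, d j ≤ n) : 0 ≤ cCoeff n d := by
  rw [cCoeff, show (n + k - 1 - ∑ j, (d j : ℝ)) = (n + k - ∑ j, (d j : ℝ)) - 1 by ring,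
    ← natCast_add_sub_sum_eq hd]
  rcases Nat.eq_zero_or_pos (k + (n - ∑ j, d j)) with hm | hm
  · simp [hm]
  · have : (1 : ℝ) ≤ (k + (n - ∑ j, d j) : ℕ) := Nat.one_le_cast.2 hm
    positivity

theorem deltaSet_nonempty {n : ℕ} (K : EV n → EV n → ℝ) {k : ℕ} {d : Fin k → ℕ}
    (hd : ∑ j, d j ≤ n) : (deltaSet K d).Nonempty := by
  obtain ⟨f⟩ := Function.Embedding.nonempty_of_card_le (α := Σ j, Fin (d j)) (β := Fin n)
    (by simpa [Fintype.card_sigma] using hd)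
  exact ⟨_, fun a => stdB n (f a),
    (EuclideanSpace.basisFun (Fin n) ℝ).orthonormal.comp f f.injective, rfl⟩

section Curvature

variable {n : ℕ} {F : Type*} [NormedAddCommGroup F] [InnerProductSpace ℝ F]
  (h : EV n →ₗ[ℝ] EV n →ₗ[ℝ] F)

theorem cCoeff_mul_norm_meanCurv_sq {k : ℕ} (d : Fin k → ℕ) :
    2 * (cCoeff n d * ‖meanCurv h‖ ^ 2)
      = ((n + k - ∑ j, (d j : ℝ)) - 1) / (n + k - ∑ j, (d j : ℝ))
          * ‖∑ i, h (stdB n i) (stdB n i)‖ ^ 2 := by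
  rcases Nat.eq_zero_or_pos n with rfl | hn
  · simp [meanCurv]
  · rw [cCoeff, meanCurv, norm_smul, norm_inv, Real.norm_natCast]
    field_simp
    ring

theorem scalarCurv_sub_sum_tauFam_le (hsymm : ∀ X Y : EV n, h X Y = h Y X) {k : ℕ}
    {d : Fin k → ℕ} (hd : ∑ j, d j ≤ n) {e : (Σ j, Fin (d j)) → EV n} (he : Orthonormal ℝ e) :
    scalarCurv (gaussK (fun _ _ => 0) h)
        - ∑ j, tauFam (gaussK (fun _ _ => 0) h) (fun α => e ⟨j, α⟩)
      ≤ cCoeff n d * ‖meanCurv h‖ ^ 2 := by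
  obtain ⟨b, hb⟩ := he.exists_orthonormalBasis_sum_inl (ι := Fin (n - ∑ j, d j))
    (by simp [Fintype.card_sigma]; omega)
  have hblocks := traceSqSubNormSq_sub_sum_blocks_le fun a a' => h (b a) (b a')
  have hcard : (Fintype.card (Fin k) + Fintype.card (Fin (n - ∑ j, d j)) : ℝ)
      = n + k - ∑ j, (d j : ℝ) := by
    simpa using natCast_add_sub_sum_eq hd
  simp only [hcard, hb] at hblocks
  have hscalar : 2 * scalarCurv (gaussK (fun _ _ => 0) h)
      = traceSqSubNormSq fun a a' => h (b a) (b a') :=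
    (two_mul_tauFam_gaussK_zero h hsymm (stdB n)).trans
      (traceSqSubNormSq_orthonormalBasis_eq h (EuclideanSpace.basisFun (Fin n) ℝ) b)
  have hsum : ∑ j, traceSqSubNormSq (fun α β => h (e ⟨j, α⟩) (e ⟨j, β⟩))
      = 2 * ∑ j, tauFam (gaussK (fun _ _ => 0) h) (fun α => e ⟨j, α⟩) := by
    rw [Finset.mul_sum]
    exact Finset.sum_congr rfl fun j _ => (two_mul_tauFam_gaussK_zero h hsymm _).symm
  have htrace : ∑ i, h (stdB n i) (stdB n i) = ∑ a, h (b a) (b a) :=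
    (EuclideanSpace.basisFun (Fin n) ℝ).sum_apply_self_eq h b
  have hmean := cCoeff_mul_norm_meanCurv_sq h d
  rw [htrace] at hmean
  linarith

theorem deltaInv_gaussK_zero_le (hsymm : ∀ X Y : EV n, h X Y = h Y X) {k : ℕ}
    {d : Fin k → ℕ} (hd : ∑ j, d j ≤ n) :
    deltaInv (gaussK (fun _ _ => 0) h) d ≤ ‖meanCurv h‖ ^ 2 * cCoeff n d := by
  rw [deltaInv, sub_le_comm, mul_comm]
  refine le_csInf (deltaSet_nonempty _ hd) ?_
  rintro _ ⟨e, he, rfl⟩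
  linarith [scalarCurv_sub_sum_tauFam_le h hsymm hd he]

end Curvature

theorem squared_mean_curvature_ge_normalized_delta_general (n : ℕ) (F : Type*)
    [NormedAddCommGroup F] [InnerProductSpace ℝ F]
    (h : EV n →ₗ[ℝ] EV n →ₗ[ℝ] F)
    (hsymm : ∀ X Y : EV n, h X Y = h Y X)
    {k : ℕ} (d : Fin k → ℕ) (hd : InS n d) :
    ‖meanCurv h‖ ^ 2 ≥ normDelta (gaussK (fun _ _ => 0) h) d :=
  -- `0 ≤ c` suffices: for `c = 0` the quotient `δ / c` is `0` by convention.
  div_le_of_le_mul₀ (cCoeff_nonneg hd.2) (sq_nonneg _) (deltaInv_gaussK_zero_le h hsymm hd.2)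

/-- For any isometric immersion of a Riemannian `n`-manifold into a Euclidean
space with arbitrary codimension — encoded at a point by its second fundamental
form `h` (symmetric, values in the normal space `F`), the intrinsic sectional
curvature being `gaussK 0 h` by the Gauss equation since the ambient space is
flat — and for every `(n_1,…,n_k) ∈ 𝒮(n)`, one has `H² ≥ Δ(n_1,…,n_k)`, where
`Δ(n_1,…,n_k) = δ(n_1,…,n_k)/c(n_1,…,n_k)` is the normalized δ-invariant. -/
theorem squared_mean_curvature_ge_normalized_delta (n : ℕ) (hn : 2 ≤ n) (F : Type*)
    [NormedAddCommGroup F] [InnerProductSpace ℝ F]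
    (h : EV n →ₗ[ℝ] EV n →ₗ[ℝ] F)
    (hsymm : ∀ X Y : EV n, h X Y = h Y X)
    {k : ℕ} (d : Fin k → ℕ) (hd : InS n d) :
    ‖meanCurv h‖ ^ 2 ≥ normDelta (gaussK (fun _ _ => 0) h) d :=
  squared_mean_curvature_ge_normalized_delta_general n F h hsymm d hd
end
end

section
/- Let f be a positive eigenfunction of the Laplacian on N_1 with eigenvalue λ > 0 (Δf = λf). Then the warped product N_1 ×_f N_2 admits no minimal isometric immersion into any Riemannian manifold with non-positive sectional curvature. -/
open scoped RealInnerProductSpace BigOperators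

noncomputable section

/-- The sum `∑_{i ≤ n₁ < j} K(e_i ∧ e_j)` over mixed pairs of an adapted
orthonormal frame of a warped product `N₁ ×_f N₂`; it equals `n₂ (Δf)/f`. -/
def crossSum (n₁ n₂ : ℕ) (K : EV (n₁ + n₂) → EV (n₁ + n₂) → ℝ) : ℝ :=
  ∑ i ∈ Finset.univ.filter (fun i : Fin (n₁ + n₂) => (i : ℕ) < n₁),
    ∑ j ∈ Finset.univ.filter (fun j : Fin (n₁ + n₂) => n₁ ≤ (j : ℕ)),
      K (stdB (n₁ + n₂) i) (stdB (n₁ + n₂) j)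

/-! In an adapted orthonormal frame the Gauss equation and `K̃ ≤ 0` give, for every mixed pair,
`K(e_i ∧ e_j) ≤ ⟨h(e_i,e_i), h(e_j,e_j)⟩`. Summing over mixed pairs bounds `n₂ (Δf)/f` by
`⟨A, B⟩`, where `A` and `B` are the traces of `h` over the two factors. Minimality says
`A + B = 0`, so `⟨A, B⟩ = -‖A‖² ≤ 0`, which is impossible when `Δf = λ f` with `λ > 0`. -/

lemma orthoPair_stdB {n : ℕ} {i j : Fin n} (hij : i ≠ j) :
    OrthoPair (stdB n i) (stdB n j) := by
  have he : ![stdB n i, stdB n j] = stdB n ∘ ![i, j] := by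
    funext k; fin_cases k <;> rfl
  rw [OrthoPair, he]
  refine (EuclideanSpace.basisFun (Fin n) ℝ).orthonormal.comp _ ?_
  intro a b hab
  fin_cases a <;> fin_cases b <;> simp_all

lemma inner_nonpos_of_add_eq_zero {E : Type*} [NormedAddCommGroup E] [InnerProductSpace ℝ E]
    {x y : E} (hxy : x + y = 0) : ⟪x, y⟫ ≤ 0 := by
  rw [eq_neg_of_add_eq_zero_right hxy, inner_neg_right, neg_nonpos]
  exact real_inner_self_nonneg

lemma gaussK_le_inner {n : ℕ} {F : Type*} [NormedAddCommGroup F] [InnerProductSpace ℝ F]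
    {Ktil : EV n → EV n → ℝ} (h : EV n →ₗ[ℝ] EV n →ₗ[ℝ] F) {X Y : EV n}
    (hK : Ktil X Y ≤ 0) : gaussK Ktil h X Y ≤ ⟪h X X, h Y Y⟫ := by
  have := sq_nonneg ‖h X Y‖
  unfold gaussK
  linarith

section CrossSum

variable {n₁ n₂ : ℕ}

lemma crossSum_mono {K K' : EV (n₁ + n₂) → EV (n₁ + n₂) → ℝ}
    (hKK' : ∀ i j : Fin (n₁ + n₂), (i : ℕ) < n₁ → n₁ ≤ (j : ℕ) →
      K (stdB _ i) (stdB _ j) ≤ K' (stdB _ i) (stdB _ j)) :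
    crossSum n₁ n₂ K ≤ crossSum n₁ n₂ K' :=
  Finset.sum_le_sum fun i hi => Finset.sum_le_sum fun j hj =>
    hKK' i j (Finset.mem_filter.1 hi).2 (Finset.mem_filter.1 hj).2

variable {F : Type*} [NormedAddCommGroup F] [InnerProductSpace ℝ F]

lemma crossSum_inner_diag (h : EV (n₁ + n₂) →ₗ[ℝ] EV (n₁ + n₂) →ₗ[ℝ] F) :
    crossSum n₁ n₂ (fun X Y => ⟪h X X, h Y Y⟫) =
      ⟪∑ i ∈ Finset.univ.filter (fun i : Fin (n₁ + n₂) => (i : ℕ) < n₁), h (stdB _ i) (stdB _ i),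
        ∑ j ∈ Finset.univ.filter (fun j : Fin (n₁ + n₂) => n₁ ≤ (j : ℕ)),
          h (stdB _ j) (stdB _ j)⟫ := by
  rw [crossSum, sum_inner]
  simp only [inner_sum]

lemma crossSum_gaussK_nonpos {Ktil : EV (n₁ + n₂) → EV (n₁ + n₂) → ℝ}
    (h : EV (n₁ + n₂) →ₗ[ℝ] EV (n₁ + n₂) →ₗ[ℝ] F)
    (hnonpos : ∀ X Y : EV (n₁ + n₂), OrthoPair X Y → Ktil X Y ≤ 0)
    (hminimal : ∑ i, h (stdB (n₁ + n₂) i) (stdB (n₁ + n₂) i) = 0) :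
    crossSum n₁ n₂ (gaussK Ktil h) ≤ 0 := by
  have htrace_split :
      ∑ i ∈ Finset.univ.filter (fun i : Fin (n₁ + n₂) => (i : ℕ) < n₁), h (stdB _ i) (stdB _ i) +
        ∑ j ∈ Finset.univ.filter (fun j : Fin (n₁ + n₂) => n₁ ≤ (j : ℕ)),
          h (stdB _ j) (stdB _ j) = 0 := by
    simpa only [not_lt] using
      (Finset.sum_filter_add_sum_filter_not Finset.univ
        (fun i : Fin (n₁ + n₂) => (i : ℕ) < n₁) _).trans hminimal
  calc crossSum n₁ n₂ (gaussK Ktil h)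
      ≤ crossSum n₁ n₂ (fun X Y => ⟪h X X, h Y Y⟫) :=
        crossSum_mono fun i j hi hj =>
          gaussK_le_inner h (hnonpos _ _ (orthoPair_stdB (Fin.ne_of_lt (by omega))))
    _ = _ := crossSum_inner_diag h
    _ ≤ 0 := inner_nonpos_of_add_eq_zero htrace_split

end CrossSum

theorem no_minimal_immersion_eigenfunction_warping_general (n₁ n₂ : ℕ) (h₂ : 1 ≤ n₂)
    (lam : ℝ) (hlam : 0 < lam)
    (F : Type*) [NormedAddCommGroup F] [InnerProductSpace ℝ F]
    (h : EV (n₁ + n₂) →ₗ[ℝ] EV (n₁ + n₂) →ₗ[ℝ] F)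
    (Ktil : EV (n₁ + n₂) → EV (n₁ + n₂) → ℝ)
    (hnonpos : ∀ X Y : EV (n₁ + n₂), OrthoPair X Y → Ktil X Y ≤ 0)
    (hminimal : ∑ i, h (stdB (n₁ + n₂) i) (stdB (n₁ + n₂) i) = 0)
    (heigen : crossSum n₁ n₂ (gaussK Ktil h) = (n₂ : ℝ) * lam) :
    False := by
  have hpos : 0 < (n₂ : ℝ) * lam := mul_pos (by exact_mod_cast h₂) hlam
  rw [← heigen] at hpos
  exact hpos.not_ge (crossSum_gaussK_nonpos h hnonpos hminimal)

/-- Corollary 5.4 (eigenfunction version).  Let `f > 0` be an eigenfunction of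
the Laplacian on `N₁` with eigenvalue `λ > 0` (`Δf = λf`), so that in an
adapted frame of the warped product `N₁ ×_f N₂` the mixed curvature sum equals
`n₂ (Δf)/f = n₂ λ`.  Then `N₁ ×_f N₂` admits no minimal isometric immersion
into any Riemannian manifold of non-positive sectional curvature: there is no
symmetric second fundamental form `h` with vanishing trace together with an
ambient sectional curvature `K̃ ≤ 0` on tangent 2-planes realizing, via the
Gauss equation, such a curvature. -/
theorem no_minimal_immersion_eigenfunction_warping (n₁ n₂ : ℕ) (h₁ : 1 ≤ n₁) (h₂ : 1 ≤ n₂)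
    (lam : ℝ) (hlam : 0 < lam)
    (F : Type*) [NormedAddCommGroup F] [InnerProductSpace ℝ F]
    (h : EV (n₁ + n₂) →ₗ[ℝ] EV (n₁ + n₂) →ₗ[ℝ] F)
    (hsymm : ∀ X Y : EV (n₁ + n₂), h X Y = h Y X)
    (Ktil : EV (n₁ + n₂) → EV (n₁ + n₂) → ℝ)
    (hnonpos : ∀ X Y : EV (n₁ + n₂), OrthoPair X Y → Ktil X Y ≤ 0)
    (hminimal : ∑ i, h (stdB (n₁ + n₂) i) (stdB (n₁ + n₂) i) = 0)
    (heigen : crossSum n₁ n₂ (gaussK Ktil h) = (n₂ : ℝ) * lam) :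
    False :=
  no_minimal_immersion_eigenfunction_warping_general n₁ n₂ h₂ lam hlam F h Ktil hnonpos hminimal
    heigen
end
end
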